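/- arXiv:1604.05883 — 9 statements merged into one kernel-verified Lean document; each statement's English description precedes it below -/
import Mathlib

section
/- Let k be a commutative ring and C a commutative k-algebra. For x ∈ C and a multiplier f of C, define M_x·f : C → C by (M_x·f)(u) = x u + f(u). Then: (i) M_x·f is again a multiplier of C; (ii) for multipliers f, f' and x, y ∈ C one has M_{f'(x)+f(y)+xy}·(f' ∘ f) = (M_y·f') ∘ (M_x·f); and (iii) the interchange law holds: for all x, x', y, y' ∈ C and multipliers f, f', the element f'(x'+x) + f(y'+y) + (x'+x)(y'+y) of C equals f'(x) + f(y) + xy + (M_y·f')(x') + (M_x·f)(y') + x'y'; equivalently, with horizontal product (x, f) • (y, f') := (f'(x) + f(y) + xy, f' ∘ f) and vertical composite (u, g) ∘ (u', M_u·g) := (u' + u, g) on C × M(C), one has (x'+x, f) • (y'+y, f') = ((x, f) • (y, f')) ∘ ((x', M_x·f) • (y', M_y·f')). -/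
section

variable {k C : Type*} [CommRing k] [NonUnitalCommRing C]
  [Module k C] [SMulCommClass k C C] [IsScalarTower k C C]

/-- The "translated multiplier" `M_x·f : u ↦ x u + f u` (as a k-linear map). -/
noncomputable def translMul (x : C) (f : C →ₗ[k] C) : C →ₗ[k] C :=
  LinearMap.mul k C x + f

/-- Horizontal product on `C × M(C)`: `(x, f) • (y, f') := (f'(x) + f(y) + x y, f' ∘ f)`. -/
noncomputable def hcomp (p q : C × (C →ₗ[k] C)) : C × (C →ₗ[k] C) :=
  (q.2 p.1 + p.2 q.1 + p.1 * q.1, q.2 ∘ₗ p.2)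

/-- Vertical composite on `C × M(C)`: the composite of `(u, g)` with `(u', M_u·g)`
is `(u' + u, g)`. -/
noncomputable def vcomp (p q : C × (C →ₗ[k] C)) : C × (C →ₗ[k] C) :=
  (q.1 + p.1, p.2)

lemma translMul_apply' (x : C) (f : C →ₗ[k] C) (u : C) :
    translMul (k := k) x f u = x * u + f u := by
  simp [translMul]

/-- For x ∈ C and multipliers f, f' of a commutative k-algebra C:
(i) `M_x·f` is again a multiplier; (ii) `M_{f'(x)+f(y)+xy}·(f'∘f) = (M_y·f') ∘ (M_x·f)`;
(iii) the interchange law holds, both as an identity of elements of C and as the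
identity `(x'+x, f) • (y'+y, f') = ((x,f) • (y,f')) ∘ ((x', M_x·f) • (y', M_y·f'))`
in `C × M(C)`. -/
theorem multiplication_two_algebra_laws
    (x y x' y' : C) (f f' : C →ₗ[k] C)
    (hf : ∀ c c' : C, f (c * c') = f c * c')
    (hf' : ∀ c c' : C, f' (c * c') = f' c * c') :
    (∀ u : C, translMul x f u = x * u + f u) ∧
    (∀ c c' : C, translMul x f (c * c') = translMul x f c * c') ∧
    (translMul (f' x + f y + x * y) (f' ∘ₗ f) = (translMul y f') ∘ₗ (translMul x f)) ∧
    (f' (x' + x) + f (y' + y) + (x' + x) * (y' + y)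
      = f' x + f y + x * y + translMul y f' x' + translMul x f y' + x' * y') ∧
    (hcomp (x' + x, f) (y' + y, f')
      = vcomp (hcomp (x, f) (y, f')) (hcomp (x', translMul x f) (y', translMul y f'))) := by
  refine ⟨fun u => translMul_apply' x f u, ?_, ?_, ?_, ?_⟩
  · intro c c'
    simp only [translMul_apply', hf, mul_assoc, add_mul]
  · ext u
    simp only [translMul_apply', LinearMap.coe_comp, Function.comp_apply, map_add]
    have h1 : f y * u = y * f u := by
      rw [← hf y u, mul_comm y u, hf u y, mul_comm]
    rw [add_mul, add_mul, hf' x, h1, mul_comm x y, mul_assoc]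
    abel
  · simp only [translMul_apply', map_add, add_mul, mul_add]
    rw [mul_comm y x']
    abel
  · simp only [hcomp, vcomp, translMul_apply', map_add, Prod.mk.injEq]
    refine ⟨?_, trivial⟩
    simp only [add_mul, mul_add]
    rw [mul_comm y x']
    abel

end
end

section
/- Let k be a commutative ring, let A₀ and A₁ be commutative k-algebras, and let s, t : A₁ → A₀ and e : A₀ → A₁ be k-algebra morphisms with s ∘ e = id and t ∘ e = id. Define the vertical composite f ∘ g := f + g − e(s(g)) for f, g ∈ A₁ with t(f) = s(g), and suppose the interchange law holds: (f₁ · g₁) ∘ (f₂ · g₂) = (f₁ ∘ f₂) · (g₁ ∘ g₂) whenever t(f₁) = s(f₂) and t(g₁) = s(g₂), where · is the multiplication of A₁. Then for all q, q' ∈ ker s one has q · q' = e(t(q)) · q' (the Peiffer identity), and consequently (ker s, A₀, ∂) with ∂ = t restricted to ker s and action x ▶ q := e(x) · q is a crossed module of commutative k-algebras. -/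
/-- For strict 2-algebra data (A₀, A₁, s, t, e) over a commutative ring k
satisfying the interchange law (with vertical composite `f ∘ g := f + g - e (s g)`),
the Peiffer identity `q q' = e(t q) q'` holds for q, q' ∈ ker s, and consequently
(ker s, A₀, ∂ = t|_{ker s}) with action `x ▶ q := e x * q` is a crossed module of
commutative k-algebras. -/
theorem two_algebra_gives_crossed_module
    {k A₀ A₁ : Type*} [CommRing k]
    [NonUnitalCommRing A₀] [Module k A₀] [SMulCommClass k A₀ A₀] [IsScalarTower k A₀ A₀]
    [NonUnitalCommRing A₁] [Module k A₁] [SMulCommClass k A₁ A₁] [IsScalarTower k A₁ A₁]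
    (s t : A₁ →ₙₐ[k] A₀) (e : A₀ →ₙₐ[k] A₁)
    (hse : ∀ x : A₀, s (e x) = x) (hte : ∀ x : A₀, t (e x) = x)
    (interchange : ∀ f₁ g₁ f₂ g₂ : A₁, t f₁ = s f₂ → t g₁ = s g₂ →
      f₁ * g₁ + f₂ * g₂ - e (s (f₂ * g₂))
        = (f₁ + f₂ - e (s f₂)) * (g₁ + g₂ - e (s g₂))) :
    -- Peiffer identity: ∂(q) ▶ q' = q q' for q, q' ∈ ker s
    (∀ q q' : A₁, s q = 0 → s q' = 0 → q * q' = e (t q) * q') ∧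
    -- the action of A₀ preserves ker s and ker s is closed under multiplication
    (∀ (x : A₀) (q : A₁), s q = 0 → s (e x * q) = 0) ∧
    (∀ q q' : A₁, s q = 0 → s q' = 0 → s (q * q') = 0) ∧
    -- CM1: ∂(x ▶ q) = x ∂(q)
    (∀ (x : A₀) (q : A₁), s q = 0 → t (e x * q) = x * t q) ∧
    -- action axioms: (x x') ▶ q = x ▶ (x' ▶ q) and x ▶ (q q') = (x ▶ q) q' = q (x ▶ q')
    (∀ (x x' : A₀) (q : A₁), s q = 0 → e (x * x') * q = e x * (e x' * q)) ∧
    (∀ (x : A₀) (q q' : A₁), s q = 0 → s q' = 0 → e x * (q * q') = (e x * q) * q') ∧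
    (∀ (x : A₀) (q q' : A₁), s q = 0 → s q' = 0 → e x * (q * q') = q * (e x * q')) := by
  refine ⟨?_, ?_, ?_, ?_, ?_, ?_, ?_⟩
  · intro q q' hq hq'
    have h := interchange q 0 (e (t q)) q' (by rw [hse]) (by rw [map_zero, hq'])
    simp [hq', hse, map_mul, mul_zero] at h
    exact h.symm
  · intro x q hq
    simp [map_mul, hse, hq]
  · intro q q' hq hq'
    simp [map_mul, hq, hq']
  · intro x q hq
    simp [map_mul, hte]
  · intro x x' q hq
    rw [map_mul, mul_assoc]
  · intro x q q' hq hq'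
    rw [mul_assoc]
  · intro x q q' hq hq'
    rw [mul_left_comm]
end

section
/- Let (G, C, ∂) be a crossed module of commutative k-algebras. Then: (i) the semidirect product G ⋊ C, i.e. the k-module G × C with multiplication (g, c)(g', c') = (c ▶ g' + c' ▶ g + g g', c c'), is a commutative k-algebra; (ii) the maps s(g, c) = c, t(g, c) = ∂(g) + c, and e(c) = (0, c) are k-algebra morphisms satisfying s ∘ e = id and t ∘ e = id; and (iii) the interchange law holds: for a₁, a₂, b₁, b₂ ∈ G ⋊ C with t(a₁) = s(a₂) and t(b₁) = s(b₂), one has (a₁ b₁) ∘ (a₂ b₂) = (a₁ ∘ a₂)(b₁ ∘ b₂), where x ∘ y := x + y − e(s(y)). Hence (C, G ⋊ C, s, t, e) is strict 2-algebra data. -/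
/-- A crossed module of commutative k-algebras: a morphism `d : C → R` of
(not necessarily unital) commutative k-algebras together with a k-bilinear action
of R on C satisfying the action axioms, CM1 and CM2 (the Peiffer identity). -/
structure XMod (k C R : Type*) [CommRing k]
    [NonUnitalCommRing C] [Module k C] [SMulCommClass k C C] [IsScalarTower k C C]
    [NonUnitalCommRing R] [Module k R] [SMulCommClass k R R] [IsScalarTower k R R] where
  d : C →ₙₐ[k] R
  act : R →ₗ[k] C →ₗ[k] C
  act_act : ∀ (r r' : R) (c : C), act (r * r') c = act r (act r' c)
  act_mul_left : ∀ (r : R) (c c' : C), act r (c * c') = act r c * c'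
  act_mul_right : ∀ (r : R) (c c' : C), act r (c * c') = c * act r c'
  cm1 : ∀ (r : R) (c : C), d (act r c) = r * d c
  cm2 : ∀ (c c' : C), act (d c) c' = c * c'

section

variable {k G C : Type*} [CommRing k]
  [NonUnitalCommRing G] [Module k G] [SMulCommClass k G G] [IsScalarTower k G G]
  [NonUnitalCommRing C] [Module k C] [SMulCommClass k C C] [IsScalarTower k C C]

/-- Multiplication of the semidirect product G ⋊ C:
`(g, c)(g', c') = (c ▶ g' + c' ▶ g + g g', c c')`. -/
def sdMul (X : XMod k G C) (p q : G × C) : G × C :=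
  (X.act p.2 q.1 + X.act q.2 p.1 + p.1 * q.1, p.2 * q.2)

/-- Source map `s(g, c) = c` of the associated 2-algebra data. -/
def sdS (p : G × C) : C := p.2

/-- Target map `t(g, c) = ∂(g) + c` of the associated 2-algebra data. -/
def sdT (X : XMod k G C) (p : G × C) : C := X.d p.1 + p.2

/-- Identity-assigning map `e(c) = (0, c)` of the associated 2-algebra data. -/
def sdE (c : C) : G × C := (0, c)

lemma actc (X : XMod k G C) (a b : C) (x : G) :
    X.act a (X.act b x) = X.act b (X.act a x) := by
  rw [← X.act_act, mul_comm, X.act_act]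

lemma actswap (X : XMod k G C) (r : C) (x y : G) :
    X.act r x * y = x * X.act r y := by
  rw [← X.act_mul_left, X.act_mul_right]

/-- For a crossed module (G, C, ∂) of commutative k-algebras:
(i) the semidirect product G ⋊ C is a commutative k-algebra;
(ii) s, t, e are k-algebra morphisms with s ∘ e = id and t ∘ e = id;
(iii) the interchange law holds for the vertical composite `x ∘ y := x + y - e (s y)`.
Hence (C, G ⋊ C, s, t, e) is strict 2-algebra data. -/
theorem crossed_module_gives_two_algebra (X : XMod k G C) :
    -- (i) G ⋊ C is a commutative k-algebra:
    (∀ p q : G × C, sdMul X p q = sdMul X q p) ∧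
    (∀ p q r : G × C, sdMul X (sdMul X p q) r = sdMul X p (sdMul X q r)) ∧
    (∀ p q r : G × C, sdMul X (p + q) r = sdMul X p r + sdMul X q r) ∧
    (∀ p q r : G × C, sdMul X p (q + r) = sdMul X p q + sdMul X p r) ∧
    (∀ (a : k) (p q : G × C), sdMul X (a • p) q = a • sdMul X p q) ∧
    (∀ (a : k) (p q : G × C), sdMul X p (a • q) = a • sdMul X p q) ∧
    -- (ii) s, t, e are k-algebra morphisms with s ∘ e = id, t ∘ e = id:
    (∀ p q : G × C, sdS (p + q) = sdS p + sdS q) ∧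
    (∀ (a : k) (p : G × C), sdS (a • p) = a • sdS p) ∧
    (∀ p q : G × C, sdS (sdMul X p q) = sdS p * sdS q) ∧
    (∀ p q : G × C, sdT X (p + q) = sdT X p + sdT X q) ∧
    (∀ (a : k) (p : G × C), sdT X (a • p) = a • sdT X p) ∧
    (∀ p q : G × C, sdT X (sdMul X p q) = sdT X p * sdT X q) ∧
    (∀ c c' : C, (sdE (c + c') : G × C) = sdE c + sdE c') ∧
    (∀ (a : k) (c : C), (sdE (a • c) : G × C) = a • (sdE c : G × C)) ∧
    (∀ c c' : C, (sdE (c * c') : G × C) = sdMul X (sdE c) (sdE c')) ∧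
    (∀ c : C, sdS (sdE c : G × C) = c) ∧
    (∀ c : C, sdT X (sdE c) = c) ∧
    -- (iii) interchange law:
    (∀ a₁ a₂ b₁ b₂ : G × C, sdT X a₁ = sdS a₂ → sdT X b₁ = sdS b₂ →
      sdMul X a₁ b₁ + sdMul X a₂ b₂ - sdE (sdS (sdMul X a₂ b₂))
        = sdMul X (a₁ + a₂ - sdE (sdS a₂)) (b₁ + b₂ - sdE (sdS b₂))) := by
  refine ⟨?_, ?_, ?_, ?_, ?_, ?_, ?_, ?_, ?_, ?_, ?_, ?_, ?_, ?_, ?_, ?_, ?_, ?_⟩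
  · intro p q
    simp only [sdMul, Prod.mk.injEq]
    constructor
    · rw [mul_comm]; abel
    · rw [mul_comm]
  · intro p q r
    simp only [sdMul, Prod.mk.injEq]
    constructor
    · simp only [map_add, X.act_act, X.act_mul_left, X.act_mul_right, mul_add, add_mul,
        mul_assoc]
      rw [actc X r.2 p.2 q.1, actc X r.2 q.2 p.1, actswap X r.2 p.1 q.1,
        actswap X q.2 p.1 r.1]
      abel
    · rw [mul_assoc]
  · intro p q r
    simp only [sdMul, Prod.mk.injEq, Prod.fst_add, Prod.snd_add, map_add, LinearMap.add_apply,
      add_mul, Prod.ext_iff]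
    constructor
    · abel
    · trivial
  · intro p q r
    simp only [sdMul, Prod.mk.injEq, Prod.fst_add, Prod.snd_add, map_add, LinearMap.add_apply,
      mul_add, Prod.ext_iff]
    constructor
    · abel
    · trivial
  · intro a p q
    simp only [sdMul, Prod.smul_mk, Prod.smul_fst, Prod.smul_snd, Prod.mk.injEq, map_smul,
      LinearMap.smul_apply, smul_mul_assoc, smul_add]
  · intro a p q
    simp only [sdMul, Prod.smul_mk, Prod.smul_fst, Prod.smul_snd, Prod.mk.injEq, map_smul,
      LinearMap.smul_apply, smul_mul_assoc, mul_smul_comm, smul_add]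
  · intro p q; rfl
  · intro a p; rfl
  · intro p q; rfl
  · intro p q; simp [sdT, map_add]; abel
  · intro a p; simp [sdT, map_smul, smul_add]
  · intro p q
    simp only [sdT, sdMul, map_add, map_mul, X.cm1, add_mul, mul_add]
    rw [mul_comm q.2 (X.d p.1)]
    abel
  · intro c c'; simp [sdE, Prod.ext_iff]
  · intro a c; simp [sdE, Prod.ext_iff]
  · intro c c'; simp [sdE, sdMul, Prod.ext_iff]
  · intro c; rfl
  · intro c; simp [sdT, sdE]
  · intro a₁ a₂ b₁ b₂ h1 h2
    obtain ⟨g₁, c₁⟩ := a₁; obtain ⟨g₂, c₂⟩ := a₂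
    obtain ⟨h₁, d₁⟩ := b₁; obtain ⟨h₂, d₂⟩ := b₂
    simp only [sdT, sdS] at h1 h2
    simp only [sdMul, sdS, sdE, Prod.ext_iff, Prod.fst_add, Prod.snd_add, Prod.fst_sub,
      Prod.snd_sub, Prod.mk.injEq]
    constructor
    · rw [← h1, ← h2]
      simp only [map_add, LinearMap.add_apply, map_sub, LinearMap.sub_apply, X.cm2,
        add_mul, mul_add, map_zero, add_sub_cancel_right, smul_zero, sub_zero]
      rw [mul_comm h₁ g₂]
      abel
    · simp only [add_sub_cancel_right, add_sub_cancel]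

end
end

section
/- Let (E, R, ∂) and (E', R', ∂') be crossed modules of commutative k-algebras, let (f₁, f₀) : (E, R, ∂) → (E', R', ∂') be a crossed module morphism, and let s : R → E' be an f₀-derivation. Define g₀ : R → R' by g₀(r) = f₀(r) + ∂'(s(r)) and g₁ : E → E' by g₁(e) = f₁(e) + s(∂(e)). Then (g₁, g₀) is again a crossed module morphism (E, R, ∂) → (E', R', ∂'): g₀ and g₁ are k-algebra morphisms, ∂' ∘ g₁ = g₀ ∘ ∂, and g₁(r ▶ e) = g₀(r) ▶ g₁(e) for all r ∈ R, e ∈ E. -/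
/-- If (f₁, f₀) : (E, R, ∂) → (E', R', ∂') is a crossed module morphism
and s : R → E' is an f₀-derivation, then g₀(r) = f₀(r) + ∂'(s r) and
g₁(a) = f₁(a) + s(∂ a) define a crossed module morphism (g₁, g₀). -/
theorem derivation_shift_is_morphism
    {k E R E' R' : Type*} [CommRing k]
    [NonUnitalCommRing E] [Module k E] [SMulCommClass k E E] [IsScalarTower k E E]
    [NonUnitalCommRing R] [Module k R] [SMulCommClass k R R] [IsScalarTower k R R]
    [NonUnitalCommRing E'] [Module k E'] [SMulCommClass k E' E'] [IsScalarTower k E' E']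
    [NonUnitalCommRing R'] [Module k R'] [SMulCommClass k R' R'] [IsScalarTower k R' R']
    (X : XMod k E R) (X' : XMod k E' R')
    (f₁ : E →ₙₐ[k] E') (f₀ : R →ₙₐ[k] R')
    (hf_d : ∀ a : E, X'.d (f₁ a) = f₀ (X.d a))
    (hf_act : ∀ (r : R) (a : E), f₁ (X.act r a) = X'.act (f₀ r) (f₁ a))
    (s : R →ₗ[k] E')
    (hs : ∀ r r' : R,
      s (r * r') = X'.act (f₀ r) (s r') + X'.act (f₀ r') (s r) + s r * s r') :
    -- g₀ is a k-algebra morphism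
    (∀ r r' : R, f₀ (r + r') + X'.d (s (r + r'))
      = (f₀ r + X'.d (s r)) + (f₀ r' + X'.d (s r'))) ∧
    (∀ (κ : k) (r : R), f₀ (κ • r) + X'.d (s (κ • r)) = κ • (f₀ r + X'.d (s r))) ∧
    (∀ r r' : R, f₀ (r * r') + X'.d (s (r * r'))
      = (f₀ r + X'.d (s r)) * (f₀ r' + X'.d (s r'))) ∧
    -- g₁ is a k-algebra morphism
    (∀ a a' : E, f₁ (a + a') + s (X.d (a + a'))
      = (f₁ a + s (X.d a)) + (f₁ a' + s (X.d a'))) ∧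
    (∀ (κ : k) (a : E), f₁ (κ • a) + s (X.d (κ • a)) = κ • (f₁ a + s (X.d a))) ∧
    (∀ a a' : E, f₁ (a * a') + s (X.d (a * a'))
      = (f₁ a + s (X.d a)) * (f₁ a' + s (X.d a'))) ∧
    -- ∂' ∘ g₁ = g₀ ∘ ∂
    (∀ a : E, X'.d (f₁ a + s (X.d a)) = f₀ (X.d a) + X'.d (s (X.d a))) ∧
    -- g₁ (r ▶ a) = g₀ (r) ▶ g₁ (a)
    (∀ (r : R) (a : E), f₁ (X.act r a) + s (X.d (X.act r a))
      = X'.act (f₀ r + X'.d (s r)) (f₁ a + s (X.d a))) := by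
  refine ⟨?_, ?_, ?_, ?_, ?_, ?_, ?_, ?_⟩
  · intro r r'
    simp only [map_add]; abel
  · intro κ r
    simp only [map_smul, smul_add]
  · intro r r'
    simp only [hs, map_add, map_mul, X'.cm1]
    rw [mul_add, add_mul, add_mul, mul_comm (X'.d (s r)) (f₀ r')]; abel
  · intro a a'
    simp only [map_add]; abel
  · intro κ a
    simp only [map_smul, smul_add]
  · intro a a'
    simp only [map_mul, hs]
    rw [← hf_d, ← hf_d, X'.cm2, X'.cm2]
    rw [mul_add, add_mul, add_mul, mul_comm (f₁ a') (s (X.d a))]; abel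
  · intro a
    simp only [map_add, hf_d]
  · intro r a
    simp only [X.cm1, hs, map_add, hf_act, ← hf_d, X'.cm2, LinearMap.add_apply]
    rw [mul_comm (f₁ a) (s r)]
    abel
end

section
/- Let (E, R, ∂) and (E', R', ∂') be crossed modules of commutative k-algebras, and let f = (f₁, f₀), g = (g₁, g₀), u = (u₁, u₀) be crossed module morphisms (E, R, ∂) → (E', R', ∂'). Suppose (f₀, s) is a homotopy connecting f to g (i.e. s is an f₀-derivation with g₀ = f₀ + ∂' ∘ s and g₁ = f₁ + s ∘ ∂) and (g₀, s') is a homotopy connecting g to u. Then s + s' : R → E' is an f₀-derivation and (f₀, s + s') is a homotopy connecting f to u, i.e. u₀ = f₀ + ∂' ∘ (s + s') and u₁ = f₁ + (s + s') ∘ ∂. -/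
/-- If (f₀, s) is a homotopy connecting the crossed module morphism f
to g and (g₀, s') is a homotopy connecting g to u, then s + s' is an f₀-derivation
and (f₀, s + s') is a homotopy connecting f to u. -/
theorem homotopy_comp
    {k E R E' R' : Type*} [CommRing k]
    [NonUnitalCommRing E] [Module k E] [SMulCommClass k E E] [IsScalarTower k E E]
    [NonUnitalCommRing R] [Module k R] [SMulCommClass k R R] [IsScalarTower k R R]
    [NonUnitalCommRing E'] [Module k E'] [SMulCommClass k E' E'] [IsScalarTower k E' E']
    [NonUnitalCommRing R'] [Module k R'] [SMulCommClass k R' R'] [IsScalarTower k R' R']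
    (X : XMod k E R) (X' : XMod k E' R')
    (f₁ g₁ u₁ : E →ₙₐ[k] E') (f₀ g₀ u₀ : R →ₙₐ[k] R')
    (hf_d : ∀ a : E, X'.d (f₁ a) = f₀ (X.d a))
    (hf_act : ∀ (r : R) (a : E), f₁ (X.act r a) = X'.act (f₀ r) (f₁ a))
    (hg_d : ∀ a : E, X'.d (g₁ a) = g₀ (X.d a))
    (hg_act : ∀ (r : R) (a : E), g₁ (X.act r a) = X'.act (g₀ r) (g₁ a))
    (hu_d : ∀ a : E, X'.d (u₁ a) = u₀ (X.d a))
    (hu_act : ∀ (r : R) (a : E), u₁ (X.act r a) = X'.act (u₀ r) (u₁ a))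
    (s s' : R →ₗ[k] E')
    -- (f₀, s) is a homotopy connecting f to g
    (hs : ∀ r r' : R,
      s (r * r') = X'.act (f₀ r) (s r') + X'.act (f₀ r') (s r) + s r * s r')
    (hg₀ : ∀ r : R, g₀ r = f₀ r + X'.d (s r))
    (hg₁ : ∀ a : E, g₁ a = f₁ a + s (X.d a))
    -- (g₀, s') is a homotopy connecting g to u
    (hs' : ∀ r r' : R,
      s' (r * r') = X'.act (g₀ r) (s' r') + X'.act (g₀ r') (s' r) + s' r * s' r')
    (hu₀ : ∀ r : R, u₀ r = g₀ r + X'.d (s' r))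
    (hu₁ : ∀ a : E, u₁ a = g₁ a + s' (X.d a)) :
    -- s + s' is an f₀-derivation
    (∀ r r' : R, (s + s') (r * r')
      = X'.act (f₀ r) ((s + s') r') + X'.act (f₀ r') ((s + s') r)
        + (s + s') r * (s + s') r') ∧
    -- (f₀, s + s') connects f to u
    (∀ r : R, u₀ r = f₀ r + X'.d ((s + s') r)) ∧
    (∀ a : E, u₁ a = f₁ a + (s + s') (X.d a)) := by
  refine ⟨?_, ?_, ?_⟩
  · intro r r'
    have key : ∀ x, X'.act (g₀ r) x = X'.act (f₀ r) x + s r * x := by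
      intro x
      rw [hg₀, map_add, LinearMap.add_apply, X'.cm2]
    have key' : ∀ x, X'.act (g₀ r') x = X'.act (f₀ r') x + s r' * x := by
      intro x
      rw [hg₀, map_add, LinearMap.add_apply, X'.cm2]
    simp only [LinearMap.add_apply, hs, hs', key, key', map_add, add_mul, mul_add,
      mul_comm (s r') (s' r)]
    abel
  · intro r
    simp only [LinearMap.add_apply, map_add, hu₀, hg₀]
    abel
  · intro a
    simp only [LinearMap.add_apply, hu₁, hg₁]
    abel
end

section
/- Let (A₀, A₁, s, t, e) and (A₀', A₁', s', t', e') be strict 2-algebra data over a commutative ring k, let F = (F₁, F₀), G = (G₁, G₀), U = (U₁, U₀) be 2-algebra morphisms between them, let δ be a homotopy connecting F to G, and let δ' be a homotopy connecting G to U. Then the map δ ∗ δ' : A₀ → A₁' defined by (δ ∗ δ')(x) = δ(x) + δ'(x) − e'(t'(δ(x))) is a homotopy connecting F to U: it is a k-algebra morphism, s' ∘ (δ ∗ δ') = F₀, t' ∘ (δ ∗ δ') = U₀, and F₁(a) ∘' (δ ∗ δ')(t(a)) = (δ ∗ δ')(s(a)) ∘' U₁(a) for all a ∈ A₁. -/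
/-- Given strict 2-algebra data (A₀, A₁, s, t, e) and
(A₀', A₁', s', t', e'), 2-algebra morphisms F, G, U between them, a homotopy δ
connecting F to G and a homotopy δ' connecting G to U, the map
`(δ ∗ δ')(x) = δ x + δ' x - e' (t' (δ x))` is a homotopy connecting F to U. -/
theorem two_algebra_homotopy_comp
    {k A₀ A₁ A₀' A₁' : Type*} [CommRing k]
    [NonUnitalCommRing A₀] [Module k A₀] [SMulCommClass k A₀ A₀] [IsScalarTower k A₀ A₀]
    [NonUnitalCommRing A₁] [Module k A₁] [SMulCommClass k A₁ A₁] [IsScalarTower k A₁ A₁]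
    [NonUnitalCommRing A₀'] [Module k A₀'] [SMulCommClass k A₀' A₀'] [IsScalarTower k A₀' A₀']
    [NonUnitalCommRing A₁'] [Module k A₁'] [SMulCommClass k A₁' A₁'] [IsScalarTower k A₁' A₁']
    -- strict 2-algebra data (A₀, A₁, s, t, e)
    (s t : A₁ →ₙₐ[k] A₀) (e : A₀ →ₙₐ[k] A₁)
    (hse : ∀ x : A₀, s (e x) = x) (hte : ∀ x : A₀, t (e x) = x)
    (hinter : ∀ f₁ g₁ f₂ g₂ : A₁, t f₁ = s f₂ → t g₁ = s g₂ →
      f₁ * g₁ + f₂ * g₂ - e (s (f₂ * g₂))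
        = (f₁ + f₂ - e (s f₂)) * (g₁ + g₂ - e (s g₂)))
    -- strict 2-algebra data (A₀', A₁', s', t', e')
    (s' t' : A₁' →ₙₐ[k] A₀') (e' : A₀' →ₙₐ[k] A₁')
    (hse' : ∀ x : A₀', s' (e' x) = x) (hte' : ∀ x : A₀', t' (e' x) = x)
    (hinter' : ∀ f₁ g₁ f₂ g₂ : A₁', t' f₁ = s' f₂ → t' g₁ = s' g₂ →
      f₁ * g₁ + f₂ * g₂ - e' (s' (f₂ * g₂))
        = (f₁ + f₂ - e' (s' f₂)) * (g₁ + g₂ - e' (s' g₂)))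
    -- 2-algebra morphisms F = (F₁, F₀), G = (G₁, G₀), U = (U₁, U₀)
    (F₁ G₁ U₁ : A₁ →ₙₐ[k] A₁') (F₀ G₀ U₀ : A₀ →ₙₐ[k] A₀')
    (hFs : ∀ a : A₁, s' (F₁ a) = F₀ (s a)) (hFt : ∀ a : A₁, t' (F₁ a) = F₀ (t a))
    (hFe : ∀ x : A₀, e' (F₀ x) = F₁ (e x))
    (hGs : ∀ a : A₁, s' (G₁ a) = G₀ (s a)) (hGt : ∀ a : A₁, t' (G₁ a) = G₀ (t a))
    (hGe : ∀ x : A₀, e' (G₀ x) = G₁ (e x))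
    (hUs : ∀ a : A₁, s' (U₁ a) = U₀ (s a)) (hUt : ∀ a : A₁, t' (U₁ a) = U₀ (t a))
    (hUe : ∀ x : A₀, e' (U₀ x) = U₁ (e x))
    -- δ is a homotopy connecting F to G
    (δ : A₀ →ₙₐ[k] A₁')
    (hδs : ∀ x : A₀, s' (δ x) = F₀ x) (hδt : ∀ x : A₀, t' (δ x) = G₀ x)
    (hδ2 : ∀ a : A₁, F₁ a + δ (t a) - e' (s' (δ (t a)))
      = δ (s a) + G₁ a - e' (s' (G₁ a)))
    -- δ' is a homotopy connecting G to U
    (δ' : A₀ →ₙₐ[k] A₁')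
    (hδ's : ∀ x : A₀, s' (δ' x) = G₀ x) (hδ't : ∀ x : A₀, t' (δ' x) = U₀ x)
    (hδ'2 : ∀ a : A₁, G₁ a + δ' (t a) - e' (s' (δ' (t a)))
      = δ' (s a) + U₁ a - e' (s' (U₁ a))) :
    -- δ ∗ δ' is a k-algebra morphism
    (∀ x y : A₀, δ (x + y) + δ' (x + y) - e' (t' (δ (x + y)))
      = (δ x + δ' x - e' (t' (δ x))) + (δ y + δ' y - e' (t' (δ y)))) ∧
    (∀ (κ : k) (x : A₀), δ (κ • x) + δ' (κ • x) - e' (t' (δ (κ • x)))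
      = κ • (δ x + δ' x - e' (t' (δ x)))) ∧
    (∀ x y : A₀, δ (x * y) + δ' (x * y) - e' (t' (δ (x * y)))
      = (δ x + δ' x - e' (t' (δ x))) * (δ y + δ' y - e' (t' (δ y)))) ∧
    -- s' ∘ (δ ∗ δ') = F₀ and t' ∘ (δ ∗ δ') = U₀
    (∀ x : A₀, s' (δ x + δ' x - e' (t' (δ x))) = F₀ x) ∧
    (∀ x : A₀, t' (δ x + δ' x - e' (t' (δ x))) = U₀ x) ∧
    -- the 2-cell (naturality) condition connecting F to U
    (∀ a : A₁,
      F₁ a + (δ (t a) + δ' (t a) - e' (t' (δ (t a))))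
        - e' (s' (δ (t a) + δ' (t a) - e' (t' (δ (t a)))))
      = (δ (s a) + δ' (s a) - e' (t' (δ (s a)))) + U₁ a - e' (s' (U₁ a))) := by
  refine ⟨?_, ?_, ?_, ?_, ?_, ?_⟩
  · intro x y
    simp only [map_add]
    abel
  · intro κ x
    simp only [map_smul, smul_add, smul_sub]
  · intro x y
    have key := hinter' (δ x) (δ y) (δ' x) (δ' y)
      (by rw [hδt, hδ's]) (by rw [hδt, hδ's])
    simp only [map_mul, hδt, hδ's] at key ⊢
    exact key
  · intro x
    rw [map_sub, map_add, hδs, hδ's, hse', hδt]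
    abel
  · intro x
    rw [map_sub, map_add, hδt, hδ't, hte']
    abel
  · intro a
    have h1 := hδ2 a
    have h2 := hδ'2 a
    rw [hδs, hGs] at h1
    rw [hδ's, hUs] at h2
    have hs : s' (δ (t a) + δ' (t a) - e' (t' (δ (t a))))
        = F₀ (t a) := by
      rw [map_sub, map_add, hδs, hδ's, hse', hδt]; abel
    rw [hs, hδt, hδt, hUs]
    linear_combination (norm := abel) h1 + h2
end

section
/- Let (A₀, A₁, s, t, e) and (A₀', A₁', s', t', e') be strict 2-algebra data over a commutative ring k, let F = (F₁, F₀) and G = (G₁, G₀) be 2-algebra morphisms between them, and let δ be a homotopy connecting F to G. Define h : A₀ → A₁' by h(x) = δ(x) − e'(F₀(x)). Then h takes values in ker s', h is an F₀-derivation with respect to the crossed modules (ker s, A₀, ∂) and (ker s', A₀', ∂') (where ∂ = t|_{ker s}, ∂' = t'|_{ker s'} and the actions are x ▶ q = e(x) q, x' ▶ q' = e'(x') q'), i.e. h(x y) = F₀(x) ▶ h(y) + F₀(y) ▶ h(x) + h(x) h(y), and moreover G₀ = F₀ + ∂' ∘ h and G₁(n) = F₁(n) + h(∂(n)) for all n ∈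 ker s. Hence h is a homotopy connecting the crossed module morphism (F₁|_{ker s}, F₀) to (G₁|_{ker s}, G₀). -/
/-- Given strict 2-algebra data on both sides, 2-algebra morphisms
F = (F₁, F₀) and G = (G₁, G₀), and a homotopy δ connecting F to G, the map
`h(x) = δ x - e' (F₀ x)` takes values in ker s', is an F₀-derivation with respect to
the associated crossed modules (ker s, A₀, t|_{ker s}) and (ker s', A₀', t'|_{ker s'})
(with actions `x ▶ q = e x · q`, `x' ▶ q' = e' x' · q'`), and satisfies
G₀ = F₀ + ∂' ∘ h and G₁(n) = F₁(n) + h(∂ n) for n ∈ ker s; i.e. h is a homotopy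
connecting the corresponding crossed module morphisms. -/
theorem two_algebra_homotopy_gives_crossed_module_homotopy
    {k A₀ A₁ A₀' A₁' : Type*} [CommRing k]
    [NonUnitalCommRing A₀] [Module k A₀] [SMulCommClass k A₀ A₀] [IsScalarTower k A₀ A₀]
    [NonUnitalCommRing A₁] [Module k A₁] [SMulCommClass k A₁ A₁] [IsScalarTower k A₁ A₁]
    [NonUnitalCommRing A₀'] [Module k A₀'] [SMulCommClass k A₀' A₀'] [IsScalarTower k A₀' A₀']
    [NonUnitalCommRing A₁'] [Module k A₁'] [SMulCommClass k A₁' A₁'] [IsScalarTower k A₁' A₁']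
    (s t : A₁ →ₙₐ[k] A₀) (e : A₀ →ₙₐ[k] A₁)
    (hse : ∀ x : A₀, s (e x) = x) (hte : ∀ x : A₀, t (e x) = x)
    (hinter : ∀ f₁ g₁ f₂ g₂ : A₁, t f₁ = s f₂ → t g₁ = s g₂ →
      f₁ * g₁ + f₂ * g₂ - e (s (f₂ * g₂))
        = (f₁ + f₂ - e (s f₂)) * (g₁ + g₂ - e (s g₂)))
    (s' t' : A₁' →ₙₐ[k] A₀') (e' : A₀' →ₙₐ[k] A₁')
    (hse' : ∀ x : A₀', s' (e' x) = x) (hte' : ∀ x : A₀', t' (e' x) = x)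
    (hinter' : ∀ f₁ g₁ f₂ g₂ : A₁', t' f₁ = s' f₂ → t' g₁ = s' g₂ →
      f₁ * g₁ + f₂ * g₂ - e' (s' (f₂ * g₂))
        = (f₁ + f₂ - e' (s' f₂)) * (g₁ + g₂ - e' (s' g₂)))
    (F₁ G₁ : A₁ →ₙₐ[k] A₁') (F₀ G₀ : A₀ →ₙₐ[k] A₀')
    (hFs : ∀ a : A₁, s' (F₁ a) = F₀ (s a)) (hFt : ∀ a : A₁, t' (F₁ a) = F₀ (t a))
    (hFe : ∀ x : A₀, e' (F₀ x) = F₁ (e x))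
    (hGs : ∀ a : A₁, s' (G₁ a) = G₀ (s a)) (hGt : ∀ a : A₁, t' (G₁ a) = G₀ (t a))
    (hGe : ∀ x : A₀, e' (G₀ x) = G₁ (e x))
    (δ : A₀ →ₙₐ[k] A₁')
    (hδs : ∀ x : A₀, s' (δ x) = F₀ x) (hδt : ∀ x : A₀, t' (δ x) = G₀ x)
    (hδ2 : ∀ a : A₁, F₁ a + δ (t a) - e' (s' (δ (t a)))
      = δ (s a) + G₁ a - e' (s' (G₁ a))) :
    -- h takes values in ker s'
    (∀ x : A₀, s' (δ x - e' (F₀ x)) = 0) ∧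
    -- h is an F₀-derivation: h(xy) = F₀(x) ▶ h(y) + F₀(y) ▶ h(x) + h(x) h(y)
    (∀ x y : A₀, δ (x * y) - e' (F₀ (x * y))
      = e' (F₀ x) * (δ y - e' (F₀ y)) + e' (F₀ y) * (δ x - e' (F₀ x))
        + (δ x - e' (F₀ x)) * (δ y - e' (F₀ y))) ∧
    -- G₀ = F₀ + ∂' ∘ h
    (∀ x : A₀, G₀ x = F₀ x + t' (δ x - e' (F₀ x))) ∧
    -- G₁(n) = F₁(n) + h(∂ n) for all n ∈ ker s
    (∀ n : A₁, s n = 0 → G₁ n = F₁ n + (δ (t n) - e' (F₀ (t n)))) := by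
  refine ⟨fun x => by simp [hse', hδs x], fun x y => ?_, fun x => by
    simp [map_sub, hδt, hte'], fun n hn => ?_⟩
  · rw [map_mul, map_mul, map_mul, mul_sub, mul_sub, sub_mul, mul_sub, mul_sub,
      mul_comm (e' (F₀ y)) (δ x), mul_comm (e' (F₀ y)) (e' (F₀ x))]
    abel
  · have h2 := hδ2 n
    rw [hn, map_zero, hδs, hGs, hn, map_zero, map_zero, zero_add, sub_zero] at h2
    rw [← h2]; abel
end

section
/- Let (A₀, A₁, s, t, e) and (A₀', A₁', s', t', e') be strict 2-algebra data over a commutative ring k, let F, G, U be 2-algebra morphisms, let δ be a homotopy connecting F to G and δ' a homotopy connecting G to U, and set (δ ∗ δ')(x) = δ(x) + δ'(x) − e'(t'(δ(x))). Then the assignment Γ(δ)(x) := δ(x) − e'(s'(δ(x))) is additive with respect to ∗: for all x ∈ A₀, (δ ∗ δ')(x) − e'(s'((δ ∗ δ')(x))) = (δ(x) − e'(s'(δ(x)))) + (δ'(x) − e'(s'(δ'(x)))); that is, Γ(δ ∗ δ') = Γ(δ) + Γ(δ'). -/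
/-- Given strict 2-algebra data on both sides, 2-algebra morphisms
F, G, U, a homotopy δ connecting F to G and a homotopy δ' connecting G to U, the
assignment `Γ(δ)(x) = δ x - e' (s' (δ x))` is additive with respect to the
composition `(δ ∗ δ')(x) = δ x + δ' x - e' (t' (δ x))`:
Γ(δ ∗ δ') = Γ(δ) + Γ(δ'). -/
theorem gamma_additive_on_homotopies
    {k A₀ A₁ A₀' A₁' : Type*} [CommRing k]
    [NonUnitalCommRing A₀] [Module k A₀] [SMulCommClass k A₀ A₀] [IsScalarTower k A₀ A₀]
    [NonUnitalCommRing A₁] [Module k A₁] [SMulCommClass k A₁ A₁] [IsScalarTower k A₁ A₁]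
    [NonUnitalCommRing A₀'] [Module k A₀'] [SMulCommClass k A₀' A₀'] [IsScalarTower k A₀' A₀']
    [NonUnitalCommRing A₁'] [Module k A₁'] [SMulCommClass k A₁' A₁'] [IsScalarTower k A₁' A₁']
    (s t : A₁ →ₙₐ[k] A₀) (e : A₀ →ₙₐ[k] A₁)
    (hse : ∀ x : A₀, s (e x) = x) (hte : ∀ x : A₀, t (e x) = x)
    (s' t' : A₁' →ₙₐ[k] A₀') (e' : A₀' →ₙₐ[k] A₁')
    (hse' : ∀ x : A₀', s' (e' x) = x) (hte' : ∀ x : A₀', t' (e' x) = x)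
    (F₁ G₁ U₁ : A₁ →ₙₐ[k] A₁') (F₀ G₀ U₀ : A₀ →ₙₐ[k] A₀')
    (hFs : ∀ a : A₁, s' (F₁ a) = F₀ (s a)) (hFt : ∀ a : A₁, t' (F₁ a) = F₀ (t a))
    (hFe : ∀ x : A₀, e' (F₀ x) = F₁ (e x))
    (hGs : ∀ a : A₁, s' (G₁ a) = G₀ (s a)) (hGt : ∀ a : A₁, t' (G₁ a) = G₀ (t a))
    (hGe : ∀ x : A₀, e' (G₀ x) = G₁ (e x))
    (hUs : ∀ a : A₁, s' (U₁ a) = U₀ (s a)) (hUt : ∀ a : A₁, t' (U₁ a) = U₀ (t a))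
    (hUe : ∀ x : A₀, e' (U₀ x) = U₁ (e x))
    -- δ is a homotopy connecting F to G
    (δ : A₀ →ₙₐ[k] A₁')
    (hδs : ∀ x : A₀, s' (δ x) = F₀ x) (hδt : ∀ x : A₀, t' (δ x) = G₀ x)
    (hδ2 : ∀ a : A₁, F₁ a + δ (t a) - e' (s' (δ (t a)))
      = δ (s a) + G₁ a - e' (s' (G₁ a)))
    -- δ' is a homotopy connecting G to U
    (δ' : A₀ →ₙₐ[k] A₁')
    (hδ's : ∀ x : A₀, s' (δ' x) = G₀ x) (hδ't : ∀ x : A₀, t' (δ' x) = U₀ x)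
    (hδ'2 : ∀ a : A₁, G₁ a + δ' (t a) - e' (s' (δ' (t a)))
      = δ' (s a) + U₁ a - e' (s' (U₁ a))) :
    ∀ x : A₀,
      (δ x + δ' x - e' (t' (δ x)))
          - e' (s' (δ x + δ' x - e' (t' (δ x))))
        = (δ x - e' (s' (δ x))) + (δ' x - e' (s' (δ' x))) := by
  intro x
  simp only [map_sub, map_add, hse', hδs, hδ's, hδt]
  abel
end

section
/- Let (G, C, ∂) and (G', C', ∂') be crossed modules of commutative k-algebras, let f = (f₁, f₀), g = (g₁, g₀), u = (u₁, u₀) be crossed module morphisms, let h be a homotopy connecting f to g and h' a homotopy connecting g to u. Define Ψ(h), Ψ(h') : C → G' ⋊ C' by Ψ(h)(x) = (h(x), f₀(x)) and Ψ(h')(x) = (h'(x), g₀(x)). Then Ψ(h + h') = Ψ(h) ∗ Ψ(h'): for every x ∈ C, (h(x) + h'(x), f₀(x)) = Ψ(h)(x) + Ψ(h')(x) − e'(t'(Ψ(h)(x))), where e'(c') = (0, c') and t'(a', c') = ∂'(a') + c'. -/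
/-- Let h be a homotopy connecting crossed module morphisms f to g and
h' a homotopy connecting g to u, and let Ψ(h)(x) = (h x, f₀ x),
Ψ(h')(x) = (h' x, g₀ x) : C → G' ⋊ C'. Then Ψ(h + h') = Ψ(h) ∗ Ψ(h'): for every
x ∈ C, (h x + h' x, f₀ x) = Ψ(h)(x) + Ψ(h')(x) - e'(t'(Ψ(h)(x))), where
e'(c') = (0, c') and t'(a', c') = ∂'(a') + c'. -/
theorem psi_additive_on_homotopies
    {k G C G' C' : Type*} [CommRing k]
    [NonUnitalCommRing G] [Module k G] [SMulCommClass k G G] [IsScalarTower k G G]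
    [NonUnitalCommRing C] [Module k C] [SMulCommClass k C C] [IsScalarTower k C C]
    [NonUnitalCommRing G'] [Module k G'] [SMulCommClass k G' G'] [IsScalarTower k G' G']
    [NonUnitalCommRing C'] [Module k C'] [SMulCommClass k C' C'] [IsScalarTower k C' C']
    (X : XMod k G C) (X' : XMod k G' C')
    (f₁ g₁ u₁ : G →ₙₐ[k] G') (f₀ g₀ u₀ : C →ₙₐ[k] C')
    (hf_d : ∀ a : G, X'.d (f₁ a) = f₀ (X.d a))
    (hf_act : ∀ (x : C) (a : G), f₁ (X.act x a) = X'.act (f₀ x) (f₁ a))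
    (hg_d : ∀ a : G, X'.d (g₁ a) = g₀ (X.d a))
    (hg_act : ∀ (x : C) (a : G), g₁ (X.act x a) = X'.act (g₀ x) (g₁ a))
    (hu_d : ∀ a : G, X'.d (u₁ a) = u₀ (X.d a))
    (hu_act : ∀ (x : C) (a : G), u₁ (X.act x a) = X'.act (u₀ x) (u₁ a))
    (h h' : C →ₗ[k] G')
    -- h is a homotopy connecting f to g
    (hh : ∀ x x' : C,
      h (x * x') = X'.act (f₀ x) (h x') + X'.act (f₀ x') (h x) + h x * h x')
    (hg₀ : ∀ x : C, g₀ x = f₀ x + X'.d (h x))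
    (hg₁ : ∀ a : G, g₁ a = f₁ a + h (X.d a))
    -- h' is a homotopy connecting g to u
    (hh' : ∀ x x' : C,
      h' (x * x') = X'.act (g₀ x) (h' x') + X'.act (g₀ x') (h' x) + h' x * h' x')
    (hu₀ : ∀ x : C, u₀ x = g₀ x + X'.d (h' x))
    (hu₁ : ∀ a : G, u₁ a = g₁ a + h' (X.d a)) :
    ∀ x : C,
      ((h x + h' x, f₀ x) : G' × C')
        = (h x, f₀ x) + (h' x, g₀ x) - ((0 : G'), X'.d (h x) + f₀ x) := by
  intro x
  ext
  · simp
  · simp [hg₀]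
    abel
end
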